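/- arXiv:1404.0021 — 2 statements merged into one kernel-verified Lean document; each statement's English description precedes it below -/
import Mathlib

section
/- The maximum size of an induced subposet of the standard example S_m that has order dimension at most d (for 2 ≤ d < m) is m + d. -/
/-!
A linear extension can put `b_i` below `a_i` for at most one index `i`: two such indices `i ≠ j`
would give the cycle `b_i < a_i ≤ b_j < a_j ≤ b_i`. Every full pair `{a_i, b_i}` of a subposet
must be reversed by one of the `d` extensions realizing it, so it has at most `d` full pairs and
hence at most `m + d` elements. Conversely, all the `a_i` together with `b_0, …, b_{d-1}` are
realized by `d` explicit linear extensions.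
-/

/-- A poset has order dimension at most `d`: there are `d` linear extensions
whose intersection is the order relation. -/
def dimLE (α : Type*) [PartialOrder α] (d : ℕ) : Prop :=
  ∃ L : Fin d → LinearOrder α,
    (∀ i, ∀ x y : α, x ≤ y → (L i).le x y) ∧
    (∀ x y : α, (∀ i, (L i).le x y) → x ≤ y)

/-- The standard example `S_m`: `inl i = a_i`, `inr j = b_j`, with `a_i < b_j` iff `i ≠ j`,
and no other strict relations. -/
def StdEx (m : ℕ) := Fin m ⊕ Fin m

instance (m : ℕ) : PartialOrder (StdEx m) where
  le x y := x = y ∨ ∃ i j, x = Sum.inl i ∧ y = Sum.inr j ∧ i ≠ j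
  le_refl x := Or.inl rfl
  le_trans := by
    rintro x y z (rfl | ⟨i, j, rfl, rfl, hij⟩) (rfl | ⟨i', j', h1, rfl, hij'⟩)
    · exact Or.inl rfl
    · exact Or.inr ⟨i', j', h1, rfl, hij'⟩
    · exact Or.inr ⟨i, j, rfl, rfl, hij⟩
    · exact absurd h1 (by simp)
  le_antisymm := by
    rintro x y (rfl | ⟨i, j, rfl, rfl, hij⟩) (h | ⟨i', j', h1, h2, hij'⟩)
    · rfl
    · rfl
    · exact absurd h (by simp)
    · exact absurd h1 (by simp)

instance (m : ℕ) : Fintype (StdEx m) := instFintypeSum _ _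

open Finset Function

theorem dimLE_of_injective_of_monotone {α β : Type*} [PartialOrder α] [LinearOrder β] {d : ℕ}
    (f : Fin d → α → β) (hinj : ∀ k, Injective (f k)) (hmono : ∀ k, Monotone (f k))
    (hsep : ∀ x y, ¬ x ≤ y → ∃ k, f k y < f k x) : dimLE α d := by
  refine ⟨fun k => LinearOrder.lift' (f k) (hinj k), fun k x y hxy => hmono k hxy, ?_⟩
  intro x y hxy
  by_contra hnot
  obtain ⟨k, hk⟩ := hsep x y hnot
  exact (hxy k).not_gt hk

theorem dimLE.card_le_of_standardExample {α ι : Type*} [PartialOrder α] [Fintype ι] {d : ℕ}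
    (h : dimLE α d) (a b : ι → α) (hab : ∀ i j, i ≠ j → a i ≤ b j) (hnot : ∀ i, ¬ a i ≤ b i) :
    Fintype.card ι ≤ d := by
  obtain ⟨L, hext, hreal⟩ := h
  have hrev : ∀ i, ∃ k, ¬ (L k).le (a i) (b i) := fun i => by
    by_contra! hall
    exact hnot i (hreal _ _ hall)
  choose f hf using hrev
  suffices Injective f by simpa using Fintype.card_le_of_injective f this
  intro i j hij
  by_contra hne
  have hj : (L (f i)).le (b j) (a j) := ((L _).le_total _ _).resolve_left (hij ▸ hf j)
  exact hf i <| (L _).le_trans _ _ _ (hext _ _ _ (hab i j hne)) <|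
    (L _).le_trans _ _ _ hj (hext _ _ _ (hab j i (Ne.symm hne)))

namespace StdEx

variable {m : ℕ}

theorem inl_le_inr_iff {i j : Fin m} : LE.le (α := StdEx m) (Sum.inl i) (Sum.inr j) ↔ i ≠ j := by
  refine ⟨?_, fun h => Or.inr ⟨i, j, rfl, rfl, h⟩⟩
  rintro (h | ⟨i', j', hi, hj, hne⟩)
  · exact absurd h Sum.inl_ne_inr
  · rwa [Sum.inl_injective hi, Sum.inr_injective hj]

theorem card_le_of_dimLE {d : ℕ} (S : Finset (StdEx m)) (hS : dimLE {x // x ∈ S} d) :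
    #S ≤ m + d := by
  let A : Finset (Fin m) := S.toLeft
  let B : Finset (Fin m) := S.toRight
  have hfull : #(A ∩ B) ≤ d := by
    have := hS.card_le_of_standardExample
      (fun i : ↥(A ∩ B) => ⟨Sum.inl i.1, mem_toLeft.1 (mem_inter.1 i.2).1⟩)
      (fun i => ⟨Sum.inr i.1, mem_toRight.1 (mem_inter.1 i.2).2⟩)
      (fun i j hne => Subtype.mk_le_mk.2 (inl_le_inr_iff.2 fun h => hne (Subtype.ext h)))
      (fun i h => inl_le_inr_iff.1 (Subtype.mk_le_mk.1 h) rfl)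
    simpa only [Fintype.card_coe] using this
  have hunion : #(A ∪ B) ≤ m := (card_le_univ _).trans_eq (Fintype.card_fin m)
  calc #S = #A + #B := card_toLeft_add_card_toRight.symm
    _ = #(A ∪ B) + #(A ∩ B) := (card_union_add_card_inter A B).symm
    _ ≤ m + d := add_le_add hunion hfull

/-- The rank of an element in the `k`-th linear extension `L_k` realizing `extremalSet m d`:
`L_k` lists the `a_i` with `i ≠ k` (for `k = 0` in the order `a_1, a_{m-1}, …, a_2`, otherwise
increasingly), then `b_k`, `a_k` and the remaining `b_j`. -/
def extRank (m k : ℕ) : StdEx m → ℕ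
  | Sum.inl i =>
      if (i : ℕ) = k then m + 1
      else if k = 0 then (if (i : ℕ) = 1 then 0 else m - i)
      else i
  | Sum.inr j => if (j : ℕ) = k then m else m + 2 + j

theorem extRank_injective (k : ℕ) : Injective (extRank m k) := by
  rintro (i | i) (j | j) h <;> have := i.isLt <;> have := j.isLt <;> simp only [extRank] at h
  · congr 1; ext; split_ifs at h <;> omega
  · split_ifs at h <;> omega
  · split_ifs at h <;> omega
  · congr 1; ext; split_ifs at h <;> omega

theorem extRank_monotone (k : ℕ) : Monotone (extRank m k) := by
  rintro x y (rfl | ⟨i, j, rfl, rfl, hij⟩)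
  · rfl
  · have := i.isLt
    have := Fin.val_ne_of_ne hij
    simp only [extRank]
    split_ifs <;> omega

theorem extRank_inl_self (i : Fin m) : extRank m i (Sum.inl i) = m + 1 := by
  simp [extRank]

theorem extRank_inl_lt_of_ne {i : Fin m} {k : ℕ} (h : (i : ℕ) ≠ k) :
    extRank m k (Sum.inl i) < m := by
  have := i.isLt
  simp only [extRank]
  split_ifs <;> omega

theorem extRank_inr_self (j : Fin m) : extRank m j (Sum.inr j) = m := by
  simp [extRank]

theorem extRank_inr_of_ne {j : Fin m} {k : ℕ} (h : (j : ℕ) ≠ k) :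
    extRank m k (Sum.inr j) = m + 2 + j := by
  simp [extRank, h]

theorem le_extRank_inr (j : Fin m) (k : ℕ) : m ≤ extRank m k (Sum.inr j) := by
  simp only [extRank]
  split_ifs <;> omega

/-- Every pair `a_{i'}, a_i` with `i ≠ i'` is put in the order `a_{i'} < a_i` by some `L_k`:
by `L_i` if `i < d`, and otherwise by `L_0` or `L_1`, which order the `a_i` with `i ≥ 2`
oppositely. -/
theorem exists_extRank_inl_lt {d : ℕ} (hd : 2 ≤ d) {i i' : Fin m} (hne : i ≠ i') :
    ∃ k < d, extRank m k (Sum.inl i') < extRank m k (Sum.inl i) := by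
  have := i.isLt
  have := i'.isLt
  have hne' := Fin.val_ne_of_ne hne
  by_cases hid : (i : ℕ) < d
  · refine ⟨i, hid, ?_⟩
    rw [extRank_inl_self]
    exact (extRank_inl_lt_of_ne hne'.symm).trans (Nat.lt_succ_self m)
  by_cases hi' : (i' : ℕ) = 1 ∨ (i : ℕ) < i'
  · refine ⟨0, by omega, ?_⟩
    simp only [extRank]
    split_ifs <;> omega
  · obtain ⟨hne1, hle⟩ := not_or.1 hi'
    refine ⟨1, by omega, ?_⟩
    simp only [extRank, one_ne_zero, ↓reduceIte]
    split_ifs <;> omega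

def extremalSet (m d : ℕ) : Finset (StdEx m) :=
  (univ : Finset (Fin m)).disjSum {j : Fin m | (j : ℕ) < d}

theorem card_extremalSet {d : ℕ} (hdm : d ≤ m) : #(extremalSet m d) = m + d :=
  (card_disjSum _ _).trans (by simp [Fin.card_filter_val_lt, hdm])

theorem inr_mem_extremalSet {d : ℕ} {j : Fin m} : Sum.inr j ∈ extremalSet m d ↔ (j : ℕ) < d :=
  inr_mem_disjSum.trans (by simp)

theorem exists_extRank_lt_of_not_le {d : ℕ} (hd : 2 ≤ d) {x y : StdEx m}
    (hy : y ∈ extremalSet m d) (hxy : ¬ x ≤ y) :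
    ∃ k < d, extRank m k y < extRank m k x := by
  rcases x with i | j <;> rcases y with i' | j'
  · exact exists_extRank_inl_lt hd fun h => hxy (h ▸ le_rfl)
  · obtain rfl : i = j' := by simpa [inl_le_inr_iff] using hxy
    refine ⟨i, inr_mem_extremalSet.1 hy, ?_⟩
    rw [extRank_inr_self, extRank_inl_self]
    exact Nat.lt_succ_self m
  · refine ⟨if (i' : ℕ) = 0 then 1 else 0, by split_ifs <;> omega, ?_⟩
    exact (extRank_inl_lt_of_ne (by split_ifs <;> omega)).trans_le (le_extRank_inr j _)
  · have hne : (j : ℕ) ≠ j' := Fin.val_ne_of_ne fun h => hxy (h ▸ le_rfl)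
    refine ⟨j', inr_mem_extremalSet.1 hy, ?_⟩
    rw [extRank_inr_self, extRank_inr_of_ne hne]
    omega

theorem dimLE_extremalSet {d : ℕ} (hd : 2 ≤ d) : dimLE {x // x ∈ extremalSet m d} d :=
  dimLE_of_injective_of_monotone (fun k x => extRank m k x.1)
    (fun k => (extRank_injective k).comp Subtype.val_injective)
    (fun k => (extRank_monotone k).comp fun _ _ h => h)
    (fun x y hxy => by
      obtain ⟨k, hk, hlt⟩ := exists_extRank_lt_of_not_le hd y.2 hxy
      exact ⟨⟨k, hk⟩, hlt⟩)

end StdEx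

/-- The maximum size of an induced subposet of `S_m` of order dimension at most `d`
(for `2 ≤ d < m`) is `m + d`. -/
theorem stdEx_dimd_subposet (m d : ℕ) (hd2 : 2 ≤ d) (hdm : d < m) :
    IsGreatest {n | ∃ S : Finset (StdEx m), dimLE {x // x ∈ S} d ∧ S.card = n} (m + d) :=
  ⟨⟨StdEx.extremalSet m d, StdEx.dimLE_extremalSet hd2, StdEx.card_extremalSet hdm.le⟩,
    fun _ ⟨S, hS, hcard⟩ => hcard ▸ StdEx.card_le_of_dimLE S hS⟩
end

section
/- For every integer d ≥ 2, every integer m ≥ 2, and every ε > 0, for all sufficiently large n there exists an n-element poset whose largest induced subposet of order dimension at most d has size at most n^{log_{2m}(m+d) + ε}. -/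
theorem dimLE.of_orderEmbedding {γ α : Type*} [PartialOrder γ] [PartialOrder α] {d : ℕ}
    (h : dimLE α d) (f : γ ↪o α) : dimLE γ d := by
  obtain ⟨L, hext, hreal⟩ := h
  refine ⟨fun i => letI := L i; LinearOrder.lift' f f.injective, fun i x y hxy => ?_,
    fun x y hxy => ?_⟩
  · exact hext i _ _ (f.le_iff_le.mpr hxy)
  · exact f.le_iff_le.mp (hreal _ _ hxy)

theorem dimLE.of_mapsTo {α β : Type*} [PartialOrder α] [PartialOrder β] {d : ℕ}
    {S : Finset α} {T : Finset β} (h : dimLE S d) (f : β ↪o α) (hf : ∀ y ∈ T, f y ∈ S) :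
    dimLE T d :=
  h.of_orderEmbedding <| .ofMapLEIff (fun y => ⟨f y, hf y y.2⟩) fun _ _ => f.le_iff_le

theorem dimLE.image_fst {α β : Type*} [PartialOrder α] [PartialOrder β] [DecidableEq α]
    {d : ℕ} {S : Finset (α ×ₗ β)} (h : dimLE S d) :
    dimLE (S.image fun x => (ofLex x).1) d := by
  have hsec : ∀ a : S.image fun x => (ofLex x).1, ∃ x : S, (ofLex x.1).1 = a := by
    rintro ⟨a, ha⟩
    obtain ⟨x, hx, rfl⟩ := Finset.mem_image.mp ha
    exact ⟨⟨x, hx⟩, rfl⟩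
  choose sec hsec using hsec
  refine h.of_orderEmbedding <| .ofMapLEIff sec fun a a' => ?_
  rw [← Subtype.coe_le_coe, Prod.Lex.le_iff, hsec, hsec, Subtype.coe_lt_coe]
  constructor
  · rintro (hlt | ⟨heq, -⟩)
    · exact hlt.le
    · exact (Subtype.ext heq).le
  · intro hle
    rcases hle.lt_or_eq with hlt | rfl
    · exact .inl hlt
    · exact .inr ⟨rfl, le_rfl⟩

/-- `ExStarLE α d B` is the paper's `ex*(α, D_{d+1}) ≤ B`. -/
def ExStarLE (α : Type*) [PartialOrder α] (d B : ℕ) : Prop :=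
  ∀ S : Finset α, dimLE S d → S.card ≤ B

namespace ExStarLE

variable {α β : Type*} [PartialOrder α] [PartialOrder β] {d A B : ℕ}

theorem of_fintype [Fintype α] : ExStarLE α d (Fintype.card α) :=
  fun S _ => S.card_le_univ

theorem sum (hA : ExStarLE α d A) (hB : ExStarLE β d B) : ExStarLE (α ⊕ β) d (A + B) := by
  intro S hS
  rw [← S.card_toLeft_add_card_toRight]
  refine add_le_add (hA _ (hS.of_mapsTo (.ofMapLEIff .inl fun _ _ => Sum.inl_le_inl_iff) ?_))
    (hB _ (hS.of_mapsTo (.ofMapLEIff .inr fun _ _ => Sum.inr_le_inr_iff) ?_)) <;> simp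

theorem lex (hA : ExStarLE α d A) (hB : ExStarLE β d B) : ExStarLE (α ×ₗ β) d (A * B) := by
  classical
  intro S hS
  let fibre (a : α) : Finset β := S.preimage (fun b => toLex (a, b)) (by intro; simp)
  have card_fibre (a : α) : (fibre a).card = (S.filter fun x => (ofLex x).1 = a).card := by
    rw [Finset.card_preimage (hf := by intro; simp)]
    congr 1
    refine Finset.filter_congr fun x _ => ⟨?_, fun hx => ⟨(ofLex x).2, ?_⟩⟩
    · rintro ⟨b, rfl⟩
      rfl
    · rw [← hx]
      rfl
  let embed (a : α) : β ↪o α ×ₗ β :=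
    .ofMapLEIff (fun b => toLex (a, b)) fun _ _ => by simp [Prod.Lex.toLex_le_toLex]
  calc S.card = ∑ a ∈ S.image fun x => (ofLex x).1, (fibre a).card := by
        simp only [card_fibre]
        exact Finset.card_eq_sum_card_fiberwise fun x hx => Finset.mem_image_of_mem _ hx
    _ ≤ ∑ _a ∈ S.image fun x => (ofLex x).1, B :=
        Finset.sum_le_sum fun a _ =>
          hB _ (hS.of_mapsTo (embed a) fun _ hb => Finset.mem_preimage.mp hb)
    _ ≤ A * B := by
        rw [Finset.sum_const, smul_eq_mul]
        exact Nat.mul_le_mul_right _ (hA _ hS.image_fst)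

end ExStarLE

theorem card_le_of_dimLE_of_crossing {α ι : Type*} [PartialOrder α] [Fintype ι] {d : ℕ}
    (h : dimLE α d) (x y : ι → α) (hxy : ∀ i, ¬ x i ≤ y i)
    (hcross : ∀ i j, i ≠ j → x i ≤ y j) : Fintype.card ι ≤ d := by
  obtain ⟨L, hext, hreal⟩ := h
  have hrev : ∀ i, ∃ k, ¬ (L k).le (x i) (y i) := fun i => by
    by_contra! hle
    exact hxy i (hreal _ _ hle)
  choose k hk using hrev
  refine (Fintype.card_le_of_injective k fun i j hij => ?_).trans_eq (Fintype.card_fin d)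
  by_contra hne
  have hj : (L (k j)).le (y j) (x j) := ((L (k j)).le_total _ _).resolve_left (hk j)
  have hij' : (L (k j)).le (x i) (y j) := hext _ _ _ (hcross i j hne)
  have hji : (L (k j)).le (x j) (y i) := hext _ _ _ (hcross j i (Ne.symm hne))
  exact hk i <| hij ▸ (L (k j)).le_trans _ _ _ ((L (k j)).le_trans _ _ _ hij' hj) hji

/-- The standard example `S_m`, with `inl i` for `a_i` and `inr j` for `b_j`. -/
def StandardExample (m : ℕ) : Type := Fin m ⊕ Fin m

namespace StandardExample

variable {m : ℕ}

instance : Fintype (StandardExample m) := inferInstanceAs (Fintype (Fin m ⊕ Fin m))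

instance : PartialOrder (StandardExample m) where
  le
    | .inl i, .inl j => i = j
    | .inl i, .inr j => i ≠ j
    | .inr _, .inl _ => False
    | .inr i, .inr j => i = j
  le_refl x := by cases x <;> rfl
  le_trans x y z := by cases x <;> cases y <;> cases z <;> grind
  le_antisymm x y := by cases x <;> cases y <;> grind

theorem card : Fintype.card (StandardExample m) = 2 * m := by
  change Fintype.card (Fin m ⊕ Fin m) = 2 * m
  simp [two_mul]

theorem exStarLE (d : ℕ) : ExStarLE (StandardExample m) d (m + d) := by
  classical
  intro S hS
  let T : Finset (Fin m ⊕ Fin m) := S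
  have hpairs : (T.toLeft ∩ T.toRight).card ≤ d := by
    rw [← Fintype.card_coe]
    refine card_le_of_dimLE_of_crossing hS
      (fun i => ⟨.inl i, Finset.mem_toLeft.mp (Finset.mem_inter.mp i.2).1⟩)
      (fun i => ⟨.inr i, Finset.mem_toRight.mp (Finset.mem_inter.mp i.2).2⟩)
      (fun i => not_not_intro rfl) fun i j hij => Subtype.coe_ne_coe.mpr hij
  calc S.card = (T.toLeft ∪ T.toRight).card + (T.toLeft ∩ T.toRight).card := by
        rw [Finset.card_union_add_card_inter, Finset.card_toLeft_add_card_toRight]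
        rfl
    _ ≤ m + d := add_le_add ((Finset.card_le_univ _).trans_eq (Fintype.card_fin m)) hpairs

end StandardExample

/-- The poset of a base-`2m` digit list `c :: L` (least significant digit first): `c` extra
points beside `S_m ×ₗ` the poset of `L`, so that it has `ofDigits (2 * m) (c :: L)` elements. -/
def DigitPoset (m : ℕ) : List ℕ → Type
  | [] => PEmpty
  | c :: L => Fin c ⊕ (StandardExample m ×ₗ DigitPoset m L)

namespace DigitPoset

instance instPartialOrder (m : ℕ) : ∀ L, PartialOrder (DigitPoset m L)
  | [] => inferInstanceAs (PartialOrder PEmpty)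
  | c :: L => letI := instPartialOrder m L
    inferInstanceAs (PartialOrder (Fin c ⊕ (StandardExample m ×ₗ DigitPoset m L)))

instance instFintype (m : ℕ) : ∀ L, Fintype (DigitPoset m L)
  | [] => inferInstanceAs (Fintype PEmpty)
  | c :: L => letI := instFintype m L
    inferInstanceAs (Fintype (Fin c ⊕ (StandardExample m × DigitPoset m L)))

theorem card (m : ℕ) : ∀ L, Fintype.card (DigitPoset m L) = Nat.ofDigits (2 * m) L
  | [] => Fintype.card_pempty
  | c :: L => by
    change Fintype.card (Fin c ⊕ (StandardExample m × DigitPoset m L)) = _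
    rw [Fintype.card_sum, Fintype.card_prod, Fintype.card_fin, StandardExample.card, card m L,
      Nat.ofDigits_cons]

theorem exStarLE (m d : ℕ) : ∀ L, ExStarLE (DigitPoset m L) d (Nat.ofDigits (m + d) L)
  | [] => fun S _ => S.card_le_univ.trans Fintype.card_pempty.le
  | c :: L => by
    rw [Nat.ofDigits_cons]
    have hc : ExStarLE (Fin c) d c := by simpa using ExStarLE.of_fintype (α := Fin c) (d := d)
    exact hc.sum ((StandardExample.exStarLE d).lex (exStarLE m d L))

end DigitPoset

theorem Nat.ofDigits_add_le_mul_pow_length {b r : ℕ} (hr : 2 ≤ r) :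
    ∀ {L : List ℕ}, (∀ c ∈ L, c < b) → Nat.ofDigits r L + b ≤ b * r ^ L.length
  | [], _ => by simp
  | c :: L, hL => by
    have ih := Nat.ofDigits_add_le_mul_pow_length hr fun c hc => hL c (List.mem_cons_of_mem _ hc)
    have hc := hL c List.mem_cons_self
    rw [Nat.ofDigits_cons, List.length_cons, pow_succ]
    nlinarith

theorem pow_length_digits_le_rpow {b r n : ℕ} (hb : 2 ≤ b) (hr : 1 ≤ r) (hn : n ≠ 0) :
    (r : ℝ) ^ (Nat.digits b n).length ≤ r * (n : ℝ) ^ Real.logb b r := by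
  have hb0 : (0 : ℝ) < b := by positivity
  have hbr : (b : ℝ) ^ Real.logb b r = r :=
    Real.rpow_logb hb0 (by exact_mod_cast (by omega : b ≠ 1)) (by positivity)
  have hlen : ((b ^ (Nat.digits b n).length : ℕ) : ℝ) ≤ ((b * n : ℕ) : ℝ) := by
    exact_mod_cast Nat.base_pow_length_digits_le b n hb hn
  calc (r : ℝ) ^ (Nat.digits b n).length
      = ((b : ℝ) ^ (Nat.digits b n).length) ^ Real.logb b r := by
        rw [← Real.rpow_pow_comm hb0.le, hbr]
    _ ≤ ((b : ℝ) * n) ^ Real.logb b r := by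
        push_cast at hlen
        exact Real.rpow_le_rpow (by positivity) hlen
          (Real.logb_nonneg (by exact_mod_cast (by omega : 1 < b)) (by exact_mod_cast hr))
    _ = r * (n : ℝ) ^ Real.logb b r := by rw [Real.mul_rpow hb0.le (Nat.cast_nonneg n), hbr]

theorem exStar_Dd_upper_general (d m : ℕ) (hm : 2 ≤ m) (ε : ℝ) (hε : 0 < ε) :
    ∃ N : ℕ, ∀ n : ℕ, N ≤ n →
      ∃ (P : Type) (_ : PartialOrder P) (_ : Fintype P), Fintype.card P = n ∧
        ∀ S : Finset P, dimLE {x // x ∈ S} d →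
          (S.card : ℝ) ≤ (n : ℝ) ^ (Real.logb (2 * m) (m + d) + ε) := by
  set K : ℕ := 2 * m * (m + d)
  refine ⟨max 1 ⌈(K : ℝ) ^ ε⁻¹⌉₊, fun n hn => ⟨DigitPoset m (Nat.digits (2 * m) n),
    inferInstance, inferInstance, by rw [DigitPoset.card, Nat.ofDigits_digits], fun S hS => ?_⟩⟩
  have hn0 : n ≠ 0 := by omega
  have hK : (K : ℝ) ≤ (n : ℝ) ^ ε :=
    (Real.rpow_inv_le_iff_of_pos (Nat.cast_nonneg _) (Nat.cast_nonneg _) hε).mp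
      ((Nat.le_ceil _).trans (by exact_mod_cast le_of_max_le_right hn))
  have hcard : S.card ≤ 2 * m * (m + d) ^ (Nat.digits (2 * m) n).length :=
    le_self_add.trans <| (Nat.add_le_add_right (DigitPoset.exStarLE m d _ S hS) _).trans
      (Nat.ofDigits_add_le_mul_pow_length (by omega) fun c hc => Nat.digits_lt_base (by omega) hc)
  have hpow := pow_length_digits_le_rpow (r := m + d) (by omega : 2 ≤ 2 * m) (by omega) hn0
  push_cast at hpow ⊢
  calc (S.card : ℝ) ≤ 2 * m * (m + d) ^ (Nat.digits (2 * m) n).length := by exact_mod_cast hcard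
    _ ≤ 2 * m * ((m + d) * (n : ℝ) ^ Real.logb (2 * m) (m + d)) := by gcongr
    _ = K * (n : ℝ) ^ Real.logb (2 * m) (m + d) := by push_cast [K]; ring
    _ ≤ (n : ℝ) ^ ε * (n : ℝ) ^ Real.logb (2 * m) (m + d) := by gcongr
    _ = (n : ℝ) ^ (Real.logb (2 * m) (m + d) + ε) := by
        rw [← Real.rpow_add (by positivity), add_comm]

/-- For every `d ≥ 2`, `m ≥ 2` and `ε > 0`, for all sufficiently large `n` there is an
`n`-element poset whose largest induced subposet of dimension at most `d` has size at
most `n ^ (log_{2m}(m+d) + ε)`. -/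
theorem exStar_Dd_upper (d m : ℕ) (hd : 2 ≤ d) (hm : 2 ≤ m) (ε : ℝ) (hε : 0 < ε) :
    ∃ N : ℕ, ∀ n : ℕ, N ≤ n →
      ∃ (P : Type) (_ : PartialOrder P) (_ : Fintype P), Fintype.card P = n ∧
        ∀ S : Finset P, dimLE {x // x ∈ S} d →
          (S.card : ℝ) ≤ (n : ℝ) ^ (Real.logb (2 * m) (m + d) + ε) :=
  exStar_Dd_upper_general d m hm ε hε
end
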